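/- From the legal configuration of the crossover gadget in which A and C point outward, B and D point inward, and internally K,L are directed toward u1, H,I toward u2, G,J toward u3, E toward u4, F,M toward u5, P,Q toward u7, O,R toward u8, and N,S toward u9, the sequence of single-edge reversals (A, F, H, G, M, O, N, B) is a legal play in which every intermediate configuration is legal and each edge is reversed exactly once (a vertical propagation: it reverses both vertical external edges); likewise, from the same configuration the sequence (C, K, I, L, J, E, P, R, Q, S, D) is a legal play reversing both horizontal external edges (a horizontal propagation). -/

import Mathlib

/-! The crossover gadget of Nondeterministic Constraint Logic.

Vertices `u1, …, u10` are represented by `0, …, 9 : Fin 10`.  Edges `A, B, C, D, E`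
have weight 2 ("blue"), the remaining edges weight 1 ("red").  `A, B, C, D` are
dangling (external) edges; `A` and `B` are the vertical external edges. -/

inductive CEdge
  | A | B | C | D | E | F | G | H | I | J | K | L | M | N | O | P | Q | R | S
  deriving DecidableEq

instance : Fintype CEdge :=
  ⟨{.A, .B, .C, .D, .E, .F, .G, .H, .I, .J, .K, .L, .M, .N, .O, .P, .Q, .R, .S},
    fun x => by cases x <;> decide⟩

namespace Crossover

/-- Edge weights: `A, B, C, D, E` are weight-2, the rest weight-1. -/
def weight : CEdge → ℕ
  | .A | .B | .C | .D | .E => 2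
  | _ => 1

/-- Endpoints of the edges.  The second component is `none` for a dangling
(external) edge, whose unique gadget vertex is the first component. -/
def ends : CEdge → Fin 10 × Option (Fin 10)
  | .C => (0, none)      -- C dangling at u1
  | .A => (4, none)      -- A dangling at u5
  | .B => (5, none)      -- B dangling at u6
  | .D => (9, none)      -- D dangling at u10
  | .E => (3, some 6)    -- E : u4–u7
  | .K => (0, some 1)    -- K : u1–u2
  | .L => (0, some 2)    -- L : u1–u3
  | .H => (1, some 2)    -- H : u2–u3
  | .I => (1, some 3)    -- I : u2–u4
  | .J => (2, some 3)    -- J : u3–u4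
  | .F => (1, some 4)    -- F : u2–u5
  | .G => (2, some 5)    -- G : u3–u6
  | .M => (4, some 7)    -- M : u5–u8
  | .N => (5, some 8)    -- N : u6–u9
  | .P => (6, some 7)    -- P : u7–u8
  | .Q => (6, some 8)    -- Q : u7–u9
  | .O => (7, some 8)    -- O : u8–u9
  | .R => (7, some 9)    -- R : u8–u10
  | .S => (8, some 9)    -- S : u9–u10

/-- A configuration assigns a direction to every edge.  For a dangling edge,
`true` means pointing inward (towards its gadget vertex); for an internal edge
with endpoints `(v, some w)`, `true` means pointing towards `w`. -/
abbrev Config := CEdge → Bool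

/-- The vertex an edge points into (`none` exactly when a dangling edge points
outward, away from the gadget). -/
def head (cfg : Config) (e : CEdge) : Option (Fin 10) :=
  match ends e, cfg e with
  | (v, none), true => some v
  | (_, none), false => none
  | (_, some w), true => some w
  | (v, some _), false => some v

/-- The inflow of a vertex: the sum of the weights of the edges directed into it. -/
def inflow (cfg : Config) (v : Fin 10) : ℕ :=
  ∑ e : CEdge, if head cfg e = some v then weight e else 0

/-- A configuration is legal if every vertex has inflow at least 2. -/
def Legal (cfg : Config) : Prop := ∀ v : Fin 10, 2 ≤ inflow cfg v

/-- A dangling (external) edge points inward. -/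
def Inward (cfg : Config) (e : CEdge) : Prop := cfg e = true

/-- A dangling (external) edge points outward. -/
def Outward (cfg : Config) (e : CEdge) : Prop := cfg e = false


/-- Reversing a single edge. -/
def flip (cfg : Config) (e : CEdge) : Config := Function.update cfg e (!cfg e)

/-- `LegalPlay cfg es` holds when the edges of `es` can be reversed one after the
other, every configuration obtained after a reversal being legal. -/
def LegalPlay : Config → List CEdge → Prop
  | _, [] => True
  | cfg, e :: es => Legal (flip cfg e) ∧ LegalPlay (flip cfg e) es

/-- The legal configuration of the crossover gadget in which `A` and `C` point
outward, `B` and `D` point inward, `K, L` are directed toward `u1`, `H, I` toward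
`u2`, `G, J` toward `u3`, `E` toward `u4`, `F, M` toward `u5`, `P, Q` toward `u7`,
`O, R` toward `u8` and `N, S` toward `u9`.  (With the conventions of `ends`, the
edges directed toward their second endpoint are exactly `B`, `D`, `F`, `N`.) -/
def start : Config
  | .B | .D | .F | .N => true
  | _ => false

end Crossover

/-! Reversing an edge changes inflow only at its ends: the vertex it pointed into loses the
edge's weight and the other end gains it. So a reversal from a legal configuration stays legal
as soon as the vertex the edge points into has inflow at least `weight e + 2`, and both
propagations are verified by checking this slack at every step of the play. -/

namespace Crossover

instance : DecidablePred Legal := fun cfg => inferInstanceAs (Decidable (∀ v, 2 ≤ inflow cfg v))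

theorem head_flip_of_ne {cfg : Config} {e e' : CEdge} (h : e' ≠ e) :
    head (flip cfg e) e' = head cfg e' := by
  unfold head
  rw [flip, Function.update_of_ne h]

theorem head_flip_self_ne {cfg : Config} {e : CEdge} {v : Fin 10} (h : head cfg e = some v) :
    head (flip cfg e) e ≠ some v := by
  have no_loop : (ends e).2 ≠ some (ends e).1 := by cases e <;> decide
  unfold head at h ⊢
  rw [flip, Function.update_self]
  generalize cfg e = b at h ⊢
  generalize ends e = p at h no_loop ⊢
  obtain ⟨u, _ | w⟩ := p <;> cases b <;> grind

theorem inflow_flip_add (cfg : Config) (e : CEdge) (v : Fin 10) :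
    inflow (flip cfg e) v + (if head cfg e = some v then weight e else 0) =
      inflow cfg v + (if head (flip cfg e) e = some v then weight e else 0) := by
  unfold inflow
  rw [← Finset.add_sum_erase _ _ (Finset.mem_univ e),
    ← Finset.add_sum_erase _ _ (Finset.mem_univ e),
    Finset.sum_congr rfl fun e' he' => by rw [head_flip_of_ne (Finset.ne_of_mem_erase he')]]
  ring

def Reversible (cfg : Config) (e : CEdge) : Prop :=
  ∀ v, head cfg e = some v → weight e + 2 ≤ inflow cfg v

instance (cfg : Config) (e : CEdge) : Decidable (Reversible cfg e) :=
  inferInstanceAs (Decidable (∀ v, head cfg e = some v → weight e + 2 ≤ inflow cfg v))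

theorem Legal.flip_of_reversible {cfg : Config} {e : CEdge} (hcfg : Legal cfg)
    (he : Reversible cfg e) : Legal (flip cfg e) := by
  intro v
  have key := inflow_flip_add cfg e v
  by_cases hv : head cfg e = some v
  · have := he v hv
    rw [if_pos hv, if_neg (head_flip_self_ne hv)] at key
    omega
  · have := hcfg v
    rw [if_neg hv] at key
    split_ifs at key <;> omega

def ReversiblePlay : Config → List CEdge → Prop
  | _, [] => True
  | cfg, e :: es => Reversible cfg e ∧ ReversiblePlay (flip cfg e) es

instance decidableReversiblePlay : ∀ cfg es, Decidable (ReversiblePlay cfg es)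
  | _, [] => isTrue trivial
  | cfg, e :: es =>
    have := decidableReversiblePlay (flip cfg e) es
    inferInstanceAs (Decidable (_ ∧ _))

theorem Legal.legalPlay_of_reversiblePlay {cfg : Config} {es : List CEdge} (hcfg : Legal cfg)
    (hes : ReversiblePlay cfg es) : LegalPlay cfg es := by
  induction es generalizing cfg with
  | nil => trivial
  | cons e es ih =>
    have hflip := hcfg.flip_of_reversible hes.1
    exact ⟨hflip, ih hflip hes.2⟩

end Crossover

open Crossover in
/-- From the indicated legal configuration of the crossover gadget, the sequence of
single-edge reversals `(A, F, H, G, M, O, N, B)` is a legal play in which every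
intermediate configuration is legal and each edge is reversed exactly once (a
vertical propagation), and likewise `(C, K, I, L, J, E, P, R, Q, S, D)` is a legal
play reversing both horizontal external edges (a horizontal propagation). -/
theorem crossover_propagations :
    Legal start ∧
    Outward start .A ∧ Outward start .C ∧ Inward start .B ∧ Inward start .D ∧
    head start .K = some 0 ∧ head start .L = some 0 ∧
    head start .H = some 1 ∧ head start .I = some 1 ∧
    head start .G = some 2 ∧ head start .J = some 2 ∧
    head start .E = some 3 ∧
    head start .F = some 4 ∧ head start .M = some 4 ∧
    head start .P = some 6 ∧ head start .Q = some 6 ∧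
    head start .O = some 7 ∧ head start .R = some 7 ∧
    head start .N = some 8 ∧ head start .S = some 8 ∧
    ([CEdge.A, .F, .H, .G, .M, .O, .N, .B] : List CEdge).Nodup ∧
    LegalPlay start [CEdge.A, .F, .H, .G, .M, .O, .N, .B] ∧
    ([CEdge.C, .K, .I, .L, .J, .E, .P, .R, .Q, .S, .D] : List CEdge).Nodup ∧
    LegalPlay start [CEdge.C, .K, .I, .L, .J, .E, .P, .R, .Q, .S, .D] := by
  have legal_start : Legal start := by decide
  exact ⟨legal_start, rfl, rfl, rfl, rfl, rfl, rfl, rfl, rfl, rfl, rfl, rfl, rfl, rfl, rfl, rfl,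
    rfl, rfl, rfl, rfl, by decide, legal_start.legalPlay_of_reversiblePlay (by decide), by decide,
    legal_start.legalPlay_of_reversiblePlay (by decide)⟩
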